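/- Let λ_i > 0 and μ_i > 0 for i = 1, 2. If 2(λ₂ − λ₁) ≥ μ₁ − μ₂ and μ₁ ≥ μ₂, then the ratio t ↦ φ^C_1(t)/φ^C_2(t) is monotone increasing on (0, ∞), i.e. τ^C_1 ≥_lr τ^C_2. -/

import Mathlib

/-- `b_i = sqrt(μ_i² + 4 λ_i μ_i)` for the cold standby system. -/
noncomputable def bC (l m : ℝ) : ℝ := Real.sqrt (m ^ 2 + 4 * l * m)

/-- Density of the lifetime of the Markovian two-unit cold standby system. -/
noncomputable def phiC (l m t : ℝ) : ℝ :=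
  Real.exp (-((2 * l + m) * t / 2)) * (2 * l ^ 2 / bC l m) * Real.sinh (bC l m * t / 2)

/-!
Write `φ_i(t) = K_i e^{-a_i t} sinh (c_i t)` with `a_i = (2λ_i + μ_i)/2` and `c_i = b_i/2`. The
logarithmic derivative of `φ_i` is `c_i coth (c_i t) - a_i`, so the ratio increases as soon as
`c_2 coth (c_2 t) - c_1 coth (c_1 t) ≤ a_2 - a_1`. Since `x coth x` increases and `x coth x - x`
decreases on `(0, ∞)`, the left side is at most `max (c_2 - c_1) 0`. The hypotheses give
`a_1 ≤ a_2` directly, and `c_2 - c_1 ≤ a_2 - a_1`, i.e. `a_1 - c_1 ≤ a_2 - c_2`, because the slower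
decay rate `(2λ + μ - b)/2` of the density increases in `λ` and decreases in `μ`.
-/

open Real Set

theorem monotoneOn_div_of_hasDerivAt_mul {f g u v : ℝ → ℝ} {s : Set ℝ} (hs : Convex ℝ s)
    (hso : IsOpen s) (hf : ∀ x ∈ s, HasDerivAt f (f x * u x) x)
    (hg : ∀ x ∈ s, HasDerivAt g (g x * v x) x) (hf₀ : ∀ x ∈ s, 0 ≤ f x)
    (hg₀ : ∀ x ∈ s, 0 < g x) (hvu : ∀ x ∈ s, v x ≤ u x) :
    MonotoneOn (fun x => f x / g x) s := by
  have hdiv : ∀ x ∈ s, HasDerivAt (fun x => f x / g x)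
      ((f x * u x * g x - f x * (g x * v x)) / g x ^ 2) x :=
    fun x hx => (hf x hx).div (hg x hx) (hg₀ x hx).ne'
  refine monotoneOn_of_deriv_nonneg hs (fun x hx => (hdiv x hx).continuousAt.continuousWithinAt)
    (fun x hx => ?_) (fun x hx => ?_) <;> rw [hso.interior_eq] at hx
  · exact (hdiv x hx).differentiableAt.differentiableWithinAt
  · rw [(hdiv x hx).deriv]
    have := mul_le_mul_of_nonneg_left (hvu x hx) (mul_nonneg (hf₀ x hx) (hg₀ x hx).le)
    apply div_nonneg _ (sq_nonneg _)
    linarith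

theorem convexOn_sinh : ConvexOn ℝ (Ici 0) sinh := by
  refine MonotoneOn.convexOn_of_deriv (convex_Ici 0) continuous_sinh.continuousOn
    differentiable_sinh.differentiableOn ?_
  rw [Real.deriv_sinh, interior_Ici]
  intro x hx y hy hxy
  exact cosh_le_cosh.2 (by rwa [abs_of_pos hx, abs_of_pos hy])

theorem monotoneOn_mul_cosh_div_sinh : MonotoneOn (fun x => x * cosh x / sinh x) (Ioi 0) := by
  intro v (hv : 0 < v) u (hu : 0 < u) hvu
  rw [div_le_div_iff₀ (sinh_pos_iff.2 hv) (sinh_pos_iff.2 hu)]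
  -- `sinh x / x` is increasing, applied at `u - v ≤ u + v`.
  have hsecant : (u + v) * sinh (u - v) ≤ (u - v) * sinh (u + v) := by
    rcases hvu.eq_or_lt with rfl | hlt
    · simp
    have := convexOn_sinh.secant_mono (a := 0) (x := u - v) (y := u + v) (mem_Ici.2 le_rfl)
      (by simp only [mem_Ici]; linarith) (by simp only [mem_Ici]; linarith) (by linarith)
      (by linarith) (by linarith)
    simp only [sinh_zero, sub_zero] at this
    rw [div_le_div_iff₀ (by linarith) (by linarith)] at this
    linarith
  rw [sinh_add, sinh_sub] at hsecant
  nlinarith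

theorem mul_cosh_div_sinh_sub_self (x : ℝ) :
    x * cosh x / sinh x - x = 2 * x / (exp (2 * x) - 1) := by
  rcases eq_or_ne x 0 with rfl | hx
  · simp
  have hs : sinh x ≠ 0 := sinh_ne_zero.2 hx
  have he : exp (2 * x) - 1 ≠ 0 := by
    rw [sub_ne_zero, Ne, exp_eq_one_iff]; simpa using hx
  rw [div_sub' hs, div_eq_div_iff hs he, sinh_eq, cosh_eq, two_mul, exp_add, exp_neg]
  field_simp
  ring

theorem antitoneOn_mul_cosh_div_sinh_sub_self :
    AntitoneOn (fun x => x * cosh x / sinh x - x) (Ioi 0) := by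
  intro v (hv : 0 < v) u (hu : 0 < u) hvu
  simp only [mul_cosh_div_sinh_sub_self]
  have hsecant := convexOn_exp.secant_mono (a := 0) (x := 2 * v) (y := 2 * u) (mem_univ _)
    (mem_univ _) (mem_univ _) (by positivity) (by positivity) (by linarith)
  simp only [exp_zero, sub_zero] at hsecant
  have hpos : 0 < (exp (2 * v) - 1) / (2 * v) :=
    div_pos (by linarith [add_one_lt_exp (by positivity : 2 * v ≠ 0)]) (by positivity)
  simpa only [one_div_div] using one_div_le_one_div_of_le hpos hsecant

theorem mul_cosh_div_sinh_mul_sub_le_max {c₁ c₂ t : ℝ} (ht : 0 < t) (hc₁ : 0 < c₁) (hc₂ : 0 < c₂) :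
    c₂ * cosh (c₂ * t) / sinh (c₂ * t) - c₁ * cosh (c₁ * t) / sinh (c₁ * t) ≤ max (c₂ - c₁) 0 := by
  have hscale : ∀ c, c * cosh (c * t) / sinh (c * t) = c * t * cosh (c * t) / sinh (c * t) / t :=
    fun c => by field_simp
  have h₁ : c₁ * t ∈ Ioi 0 := mul_pos hc₁ ht
  have h₂ : c₂ * t ∈ Ioi 0 := mul_pos hc₂ ht
  rw [hscale, hscale, ← sub_div, div_le_iff₀ ht]
  rcases le_total c₁ c₂ with hc | hc
  · have := antitoneOn_mul_cosh_div_sinh_sub_self h₁ h₂ (by gcongr)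
    linarith [mul_le_mul_of_nonneg_right (le_max_left (c₂ - c₁) 0) ht.le]
  · have := monotoneOn_mul_cosh_div_sinh h₂ h₁ (by gcongr)
    linarith [mul_le_mul_of_nonneg_right (le_max_right (c₂ - c₁) 0) ht.le]

theorem bC_pos {l m : ℝ} (hl : 0 ≤ l) (hm : 0 < m) : 0 < bC l m :=
  sqrt_pos.2 (by positivity)

theorem bC_sq {l m : ℝ} (hl : 0 ≤ l) (hm : 0 ≤ m) : bC l m ^ 2 = m ^ 2 + 4 * l * m :=
  sq_sqrt (by positivity)

theorem monotoneOn_two_mul_add_sub_bC {m : ℝ} (hm : 0 ≤ m) :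
    MonotoneOn (fun l => 2 * l + m - bC l m) (Ici 0) := by
  intro l (hl : 0 ≤ l) l' _ hll
  have hmb : m ≤ bC l m := le_sqrt_of_sq_le (by nlinarith)
  have hb := bC_sq hl hm
  suffices bC l' m ≤ bC l m + 2 * (l' - l) by dsimp only; linarith
  exact (sqrt_le_left (by linarith)).2 (by nlinarith)

theorem antitoneOn_two_mul_add_sub_bC {l : ℝ} (hl : 0 ≤ l) :
    AntitoneOn (fun m => 2 * l + m - bC l m) (Ici 0) := by
  intro m (hm : 0 ≤ m) m' _ hmm
  have hbm : bC l m ≤ m + 2 * l := (sqrt_le_left (by linarith)).2 (by nlinarith)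
  have hb := bC_sq hl hm
  suffices bC l m + (m' - m) ≤ bC l m' by dsimp only; linarith
  exact le_sqrt_of_sq_le (by nlinarith [mul_nonneg (sub_nonneg.2 hmm) (sub_nonneg.2 hbm)])

theorem hasDerivAt_phiC {l m t : ℝ} (h : sinh (bC l m / 2 * t) ≠ 0) :
    HasDerivAt (phiC l m)
      (phiC l m t * (bC l m / 2 * cosh (bC l m / 2 * t) / sinh (bC l m / 2 * t) - (2 * l + m) / 2))
      t := by
  have hexp : HasDerivAt (fun s => exp (-((2 * l + m) * s / 2))) _ t :=
    (((hasDerivAt_id t).const_mul (2 * l + m)).div_const 2).neg.exp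
  have hsinh : HasDerivAt (fun s => sinh (bC l m * s / 2)) _ t :=
    (((hasDerivAt_id t).const_mul (bC l m)).div_const 2).sinh
  rw [show bC l m / 2 * t = bC l m * t / 2 by ring] at h ⊢
  refine ((hexp.mul_const (2 * l ^ 2 / bC l m)).mul hsinh).congr_deriv ?_
  have hcancel := mul_div_cancel₀ (cosh (bC l m * t / 2)) h
  simp only [phiC, id, Pi.neg_apply]
  linear_combination -(exp (-((2 * l + m) * t / 2)) * (2 * l ^ 2 / bC l m) * (bC l m / 2)) * hcancel

theorem phiC_pos {l m t : ℝ} (hl : 0 < l) (hm : 0 < m) (ht : 0 < t) : 0 < phiC l m t := by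
  have hb := bC_pos hl.le hm
  have : 0 < sinh (bC l m * t / 2) := sinh_pos_iff.2 (by positivity)
  unfold phiC
  positivity

theorem cold_lr_sufficient (l1 l2 m1 m2 : ℝ)
    (h1 : 0 < l1) (h2 : 0 < l2) (hm1 : 0 < m1) (hm2 : 0 < m2)
    (hcond : 2 * (l2 - l1) ≥ m1 - m2) (hmu : m1 ≥ m2) :
    MonotoneOn (fun t : ℝ => phiC l1 m1 t / phiC l2 m2 t) (Set.Ioi (0 : ℝ)) := by
  have hb₁ := bC_pos h1.le hm1
  have hb₂ := bC_pos h2.le hm2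
  have hrate : 2 * l1 + m1 - bC l1 m1 ≤ 2 * l2 + m2 - bC l2 m2 :=
    (antitoneOn_two_mul_add_sub_bC h1.le hm2.le hm1.le hmu).trans
      (monotoneOn_two_mul_add_sub_bC hm2.le h1.le h2.le (by linarith))
  have hsinh {l m t : ℝ} (hb : 0 < bC l m) (ht : 0 < t) : sinh (bC l m / 2 * t) ≠ 0 :=
    (sinh_pos_iff.2 (by positivity)).ne'
  refine monotoneOn_div_of_hasDerivAt_mul (convex_Ioi 0) isOpen_Ioi
    (fun t ht => hasDerivAt_phiC (hsinh hb₁ ht)) (fun t ht => hasDerivAt_phiC (hsinh hb₂ ht))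
    (fun t ht => (phiC_pos h1 hm1 ht).le) (fun t ht => phiC_pos h2 hm2 ht) (fun t ht => ?_)
  have hgap : max (bC l2 m2 / 2 - bC l1 m1 / 2) 0 ≤ (2 * l2 + m2) / 2 - (2 * l1 + m1) / 2 :=
    max_le (by linarith) (by linarith)
  linarith [mul_cosh_div_sinh_mul_sub_le_max ht (half_pos hb₁) (half_pos hb₂)]
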